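/- With H, J, H^∨ as above, let C_q ⊆ H be a unital subalgebra and left coideal, and let C_q^▽ be the unital C[q,q⁻¹]-subalgebra of H^∨ generated by (q−1)⁻¹(C_q ∩ J). Then C_q^▽ is a left coideal of H^∨, i.e. Δ(C_q^▽) ⊆ H^∨ ⊗ C_q^▽. -/

import Mathlib

set_option synthInstance.maxHeartbeats 1000000
set_option maxHeartbeats 1000000

/- STATEMENT 15: for a torsion-free Hopf algebra H over ℂ[q,q⁻¹] (an integral form of a
   Hopf algebra A over ℂ(q)) and a unital subalgebra and left coideal C_q ⊆ H, the subalgebra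
   C_q^▽ of H^∨ generated by (q−1)⁻¹(C_q ∩ J) is a left coideal of H^∨:
   Δ(C_q^▽) ⊆ H^∨ ⊗ C_q^▽. -/

open scoped TensorProduct
open PiTensorProduct

namespace GQDP

/-- The ground ring `ℂ[q,q⁻¹]` of complex Laurent polynomials. -/
abbrev R : Type := LaurentPolynomial ℂ

/-- The field `ℂ(q)` of rational functions, realized as the fraction field of `ℂ[q,q⁻¹]`. -/
abbrev K : Type := FractionRing R

/-- The indeterminate `q`, as an element of `ℂ[q,q⁻¹]`. -/
noncomputable def q : R := LaurentPolynomial.T 1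

/-- The indeterminate `q`, as an element of `ℂ(q)`. -/
noncomputable def qK : K := algebraMap R K q

/- `A` is a Hopf algebra over `ℂ(q)` (playing the role of `H ⊗_{ℂ[q,q⁻¹]} ℂ(q)`), in which
   all the `ℂ[q,q⁻¹]`-integral forms below live as `R`-submodules. -/
variable (A : Type*) [Ring A] [HopfAlgebra K A] [Algebra R A] [IsScalarTower R K A]

/-- Scaling of an `R`-submodule of `A` by a scalar `c ∈ ℂ(q)`. -/
noncomputable def ksmul (c : K) (p : Submodule R A) : Submodule R A :=
  Submodule.span R ((fun a => c • a) '' (p : Set A))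

/-- The "tensor product" of two `R`-submodules of `A` inside `A ⊗[ℂ(q)] A`: the additive
    subgroup generated by the corresponding pure tensors (this is also their `R`-span). -/
noncomputable def tsubK (P Q : Submodule R A) : AddSubgroup (A ⊗[K] A) :=
  AddSubgroup.closure {z | ∃ p ∈ P, ∃ r ∈ Q, z = p ⊗ₜ[K] r}

/-- The augmentation ideal `J := H ∩ ker ε` of an integral form `H ⊆ A`. -/
noncomputable def Jform (H : Submodule R A) : Submodule R A :=
  H ⊓ (LinearMap.ker (Coalgebra.counit : A →ₗ[K] K)).restrictScalars R

/-- Drinfeld's algebra `H^∨ := Σ_{n≥0} (q−1)^{−n} Jⁿ`. -/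
noncomputable def Hvee (H : Submodule R A) : Submodule R A :=
  ⨆ n : ℕ, ksmul A (((qK - 1)⁻¹) ^ n) ((Jform A H) ^ n)

/-- `H` is a Hopf-algebra integral form of `A` over `ℂ[q,q⁻¹]`: a unital `R`-subalgebra,
    with `Δ(H) ⊆ H ⊗ H`, `ε(H) ⊆ ℂ[q,q⁻¹]` and `S(H) ⊆ H`. -/
structure IsHopfForm (H : Submodule R A) : Prop where
  one_mem : (1 : A) ∈ H
  mul_mem : ∀ x ∈ H, ∀ y ∈ H, x * y ∈ H
  comul_mem : ∀ x ∈ H, Coalgebra.comul (R := K) x ∈ tsubK A H H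
  counit_mem : ∀ x ∈ H, ∃ r : R, Coalgebra.counit (R := K) x = algebraMap R K r
  antipode_mem : ∀ x ∈ H, HopfAlgebra.antipode (R := K) x ∈ H

/-- `C^▽`: the unital `R`-subalgebra of `A` generated by `(q−1)⁻¹·(C ∩ J)`. -/
noncomputable def Cvee (C : Submodule R A) : Subalgebra R A :=
  Algebra.adjoin R
    ((ksmul A ((qK - 1)⁻¹)
      (C ⊓ (LinearMap.ker (Coalgebra.counit : A →ₗ[K] K)).restrictScalars R) : Submodule R A) : Set A)

/-! For `c ∈ C ∩ ker ε` the counit axiom `(id ⊗ ε) Δ = id` gives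
`Δ((q−1)⁻¹ c) = (id ⊗ (q−1)⁻¹(id − ηε))(Δc) + (q−1)⁻¹c ⊗ 1`. Since `Δc ∈ H ⊗ C` and
`(q−1)⁻¹(id − ηε)` maps `C` into the generators of `C^▽`, the first term lies in `H ⊗ C^▽`,
and `H ⊆ H^∨` because `h = ε(h)·1 + (q−1)⁻¹·(q−1)(h − ε(h)·1)`; the second term lies in
`(q−1)⁻¹J ⊗ 1`. As `Δ` is multiplicative and `H^∨`, `C^▽` are closed under multiplication, so is
`H^∨ ⊗ C^▽`, which carries the claim from the generators to all of `C^▽`. -/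

open scoped Pointwise

section Bialgebra

variable {S B : Type*} [CommRing S] [Ring B] [Bialgebra S B]

theorem comul_eq_lTensor_sub_counit_add (b : B) :
    Coalgebra.comul (R := S) b =
      LinearMap.lTensor B (LinearMap.id - Algebra.linearMap S B ∘ₗ Coalgebra.counit)
          (Coalgebra.comul b) + b ⊗ₜ[S] 1 := by
  rw [LinearMap.lTensor_sub, LinearMap.sub_apply, LinearMap.lTensor_id, LinearMap.id_apply,
    LinearMap.lTensor_comp_apply, Coalgebra.lTensor_counit_comul]
  simp

end Bialgebra

section tsubK

variable {B : Type*} [Ring B] [HopfAlgebra K B] [Algebra R B] {P Q : Submodule R B}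

theorem tmul_mem_tsubK {a b : B} (ha : a ∈ P) (hb : b ∈ Q) : a ⊗ₜ[K] b ∈ tsubK B P Q :=
  AddSubgroup.subset_closure ⟨a, ha, b, hb, rfl⟩

theorem map_mem_tsubK {P' Q' : Submodule R B} {f g : B →ₗ[K] B}
    (hf : ∀ a ∈ P, f a ∈ P') (hg : ∀ b ∈ Q, g b ∈ Q') {z : B ⊗[K] B}
    (hz : z ∈ tsubK B P Q) :
    TensorProduct.map f g z ∈ tsubK B P' Q' := by
  refine (AddSubgroup.closure_le
    ((tsubK B P' Q').comap (TensorProduct.map f g).toAddMonoidHom)).mpr ?_ hz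
  rintro _ ⟨a, ha, b, hb, rfl⟩
  exact tmul_mem_tsubK (hf a ha) (hg b hb)

theorem tsubK_mul_mem (hP : ∀ x ∈ P, ∀ y ∈ P, x * y ∈ P)
    (hQ : ∀ x ∈ Q, ∀ y ∈ Q, x * y ∈ Q) {z w : B ⊗[K] B} (hz : z ∈ tsubK B P Q)
    (hw : w ∈ tsubK B P Q) :
    z * w ∈ tsubK B P Q := by
  let pureTensors : Subsemigroup (B ⊗[K] B) :=
    { carrier := {z | ∃ p ∈ P, ∃ r ∈ Q, z = p ⊗ₜ[K] r}
      mul_mem' := by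
        rintro _ _ ⟨p, hp, r, hr, rfl⟩ ⟨p', hp', r', hr', rfl⟩
        exact ⟨p * p', hP p hp p' hp', r * r', hQ r hr r' hr',
          Algebra.TensorProduct.tmul_mul_tmul p p' r r'⟩ }
  have h (x : B ⊗[K] B) :
      x ∈ tsubK B P Q ↔ x ∈ NonUnitalSubring.closure (pureTensors : Set (B ⊗[K] B)) := by
    rw [NonUnitalSubring.mem_closure_iff, Subsemigroup.closure_eq]; rfl
  rw [h] at hz hw ⊢
  exact mul_mem hz hw

end tsubK

theorem q_ne_one : q ≠ 1 := by
  intro h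
  simpa [q, ← LaurentPolynomial.T_zero] using congrArg (fun f : R => f.coeff 1) h

theorem qK_sub_one_ne_zero : qK - 1 ≠ 0 := by
  rw [sub_ne_zero, qK, ← map_one (algebraMap R K)]
  exact (IsFractionRing.injective R K).ne q_ne_one

variable {A}

theorem ksmul_eq_smul (c : K) (p : Submodule R A) : ksmul A c p = c • p :=
  Submodule.span_eq (c • p)

theorem counit_sub_smul_one {x : A} {r : R}
    (hr : Coalgebra.counit (R := K) x = algebraMap R K r) :
    Coalgebra.counit (R := K) (x - r • 1) = 0 := by
  rw [map_sub, LinearMap.map_smul_of_tower, Bialgebra.counit_one, hr,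
    Algebra.smul_def, mul_one, sub_self]

section Hvee

variable {H : Submodule R A}

theorem smul_mul_smul_le (a b : K) (M N : Submodule R A) :
    (a • M) * (b • N) ≤ (a * b) • (M * N) := by
  simp only [Submodule.mul_le, Submodule.mem_smul_pointwise_iff_exists]
  rintro _ ⟨x, hx, rfl⟩ _ ⟨y, hy, rfl⟩
  exact ⟨x * y, Submodule.mul_mem_mul hx hy, by rw [smul_mul_smul_comm]⟩

theorem Hvee_mul_le : Hvee A H * Hvee A H ≤ Hvee A H := by
  simp only [Hvee, ksmul_eq_smul, Submodule.iSup_mul, Submodule.mul_iSup]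
  refine iSup_le fun m => iSup_le fun n => (smul_mul_smul_le _ _ _ _).trans ?_
  rw [← pow_add, ← pow_add]
  exact le_iSup (fun k => ((qK - 1)⁻¹ ^ k) • (Jform A H) ^ k) (n + m)

theorem one_le_Hvee : 1 ≤ Hvee A H :=
  le_trans (by simp [ksmul_eq_smul]) (le_iSup _ 0)

theorem smul_mem_Hvee {x : A} (hx : x ∈ Jform A H) : (qK - 1)⁻¹ • x ∈ Hvee A H :=
  Submodule.mem_iSup_of_mem 1 <| by
    rw [ksmul_eq_smul, pow_one, pow_one]; exact Submodule.smul_mem_pointwise_smul _ _ _ hx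

theorem Jform_le_Hvee : Jform A H ≤ Hvee A H := fun x hx => by
  have := smul_mem_Hvee ((Jform A H).smul_mem (q - 1) hx)
  rwa [← algebraMap_smul K (q - 1) x, smul_smul, map_sub, map_one, ← qK,
    inv_mul_cancel₀ qK_sub_one_ne_zero, one_smul] at this

theorem le_Hvee (h1 : (1 : A) ∈ H)
    (hε : ∀ x ∈ H, ∃ r : R, Coalgebra.counit (R := K) x = algebraMap R K r) : H ≤ Hvee A H := by
  intro x hx
  obtain ⟨r, hr⟩ := hε x hx
  have hJ : x - r • 1 ∈ Jform A H := ⟨H.sub_mem hx (H.smul_mem r h1), counit_sub_smul_one hr⟩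
  simpa using
    add_mem (Jform_le_Hvee hJ) ((Hvee A H).smul_mem r (Submodule.one_le.mp one_le_Hvee))

end Hvee

theorem smul_sub_smul_one_mem_Cvee {C : Submodule R A} (hC1 : (1 : A) ∈ C) {c : A} (hc : c ∈ C)
    {r : R} (hr : Coalgebra.counit (R := K) c = algebraMap R K r) :
    (qK - 1)⁻¹ • (c - r • 1) ∈ Cvee A C := by
  refine Algebra.subset_adjoin ?_
  rw [SetLike.mem_coe, ksmul_eq_smul]
  exact Submodule.smul_mem_pointwise_smul _ _ _
    ⟨C.sub_mem hc (C.smul_mem r hC1), counit_sub_smul_one hr⟩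

theorem comul_smul_mem_tsubK_Hvee_Cvee {H C : Submodule R A} (hH1 : (1 : A) ∈ H)
    (hε : ∀ x ∈ H, ∃ r : R, Coalgebra.counit (R := K) x = algebraMap R K r) (hCH : C ≤ H)
    (hC1 : (1 : A) ∈ C) {c : A} (hc : c ∈ C) (hc0 : Coalgebra.counit (R := K) c = 0)
    (hΔc : Coalgebra.comul (R := K) c ∈ tsubK A H C) :
    Coalgebra.comul (R := K) ((qK - 1)⁻¹ • c) ∈
      tsubK A (Hvee A H) (Subalgebra.toSubmodule (Cvee A C)) := by
  rw [map_smul, comul_eq_lTensor_sub_counit_add c, smul_add, ← LinearMap.smul_apply,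
    ← LinearMap.lTensor_smul, TensorProduct.smul_tmul']
  refine add_mem (map_mem_tsubK (fun a ha => le_Hvee hH1 hε ha) (fun b hb => ?_) hΔc)
    (tmul_mem_tsubK (smul_mem_Hvee ⟨hCH hc, hc0⟩) (Cvee A C).one_mem)
  obtain ⟨r, hr⟩ := hε b (hCH hb)
  simpa [hr, Algebra.algebraMap_eq_smul_one] using smul_sub_smul_one_mem_Cvee hC1 hb hr

theorem Cvee_leftCoideal_general (H C : Submodule R A) (hH : IsHopfForm A H)
    (hCH : C ≤ H)
    (hC1 : (1 : A) ∈ C)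
    (hCcoideal : ∀ c ∈ C, Coalgebra.comul (R := K) c ∈ tsubK A H C) :
    ∀ x ∈ Cvee A C, Coalgebra.comul (R := K) x ∈
      tsubK A (Hvee A H) (Subalgebra.toSubmodule (Cvee A C)) := by
  intro x hx
  induction hx using Algebra.adjoin_induction with
  | mem y hy =>
    rw [SetLike.mem_coe, ksmul_eq_smul, Submodule.mem_smul_pointwise_iff_exists] at hy
    obtain ⟨c, ⟨hc, hc0⟩, rfl⟩ := hy
    exact comul_smul_mem_tsubK_Hvee_Cvee hH.one_mem hH.counit_mem hCH hC1 hc hc0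
      (hCcoideal c hc)
  | algebraMap r =>
    rw [IsScalarTower.algebraMap_apply R K A r, Bialgebra.comul_algebraMap,
      Algebra.TensorProduct.algebraMap_apply, ← IsScalarTower.algebraMap_apply R K A r]
    exact tmul_mem_tsubK (one_le_Hvee (Submodule.algebraMap_mem r)) (Cvee A C).one_mem
  | add a b _ _ ha hb => rw [map_add]; exact add_mem ha hb
  | mul a b _ _ ha hb =>
    rw [Bialgebra.comul_mul]
    exact tsubK_mul_mem (fun u hu v hv => Hvee_mul_le (Submodule.mul_mem_mul hu hv))
      (fun u hu v hv => (Cvee A C).mul_mem hu hv) ha hb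

/-- `C_q^▽` is a left coideal of `H^∨`: `Δ(C_q^▽) ⊆ H^∨ ⊗ C_q^▽`. -/
theorem Cvee_leftCoideal (H C : Submodule R A) (hH : IsHopfForm A H)
    (hCH : C ≤ H)
    (hC1 : (1 : A) ∈ C) (hCmul : ∀ x ∈ C, ∀ y ∈ C, x * y ∈ C)
    (hCcoideal : ∀ c ∈ C, Coalgebra.comul (R := K) c ∈ tsubK A H C) :
    ∀ x ∈ Cvee A C, Coalgebra.comul (R := K) x ∈
      tsubK A (Hvee A H) (Subalgebra.toSubmodule (Cvee A C)) :=
  Cvee_leftCoideal_general H C hH hCH hC1 hCcoideal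

end GQDP
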